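/- Let {(x^t, y^t, z^t)} be generated by the proximal AMA, suppose assumption A1 holds with a triple (x̄, ȳ, z̄), and suppose (i) Σ_g + T + βB*B ≻ 0; (ii) for some μ>0, 2Σ_f − (β+μ)A*A ≻ 0 and γ < 1 + min{β,μ}/(2β). Then the sequence t ↦ (1/(γβ))‖z^t − z̄‖² + ‖y^t − ȳ‖²_T is monotonically nonincreasing (hence bounded), and moreover ‖x^{t+1} − x̄‖ → 0, ‖y^t − ȳ‖_{Σ_g} → 0, ‖B(y^t − ȳ)‖ → 0, ‖y^{t+1} − y^t‖_T → 0, and ‖z^{t+1} − z^t‖ → 0 as t → ∞. -/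

import Mathlib

/-!
Writing the optimality conditions of the two subproblems as subgradient inclusions and pairing
them with A1 through the strong monotonicity of `∂f` and `∂g` gives a one-step inequality: the
quantity `(1/(γβ))‖z − z̄‖² + ‖y − ȳ‖²_T` drops by at least
`δ‖x^{t+1} − x̄‖² + 2‖y^{t+1} − ȳ‖²_{Σg} + ‖y^{t+1} − y^t‖²_T + κ‖B(y^{t+1} − ȳ)‖²`, where `δ > 0`
comes from `2Σf − (β+μ)A*A ≻ 0` and `κ > 0` from the bound on `γ`. Telescoping makes these
decrements summable, hence each tends to zero, and so does
`z^{t+1} − z^t = −γβ(A(x^{t+1} − x̄) + B(y^{t+1} − ȳ))`.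
-/

open RealInnerProductSpace Filter Topology

/-- `v` is a subgradient of the extended-real-valued function `f` at `x`. -/
def IsSubgradAt {E : Type*} [NormedAddCommGroup E] [InnerProductSpace ℝ E]
    (f : E → EReal) (v x : E) : Prop :=
  ∀ u, f x + ((⟪v, u - x⟫ : ℝ) : EReal) ≤ f u

open scoped InnerProduct

theorem le_of_forall_le_add_mul {a b C : ℝ} (h : ∀ s : ℝ, 0 < s → s ≤ 1 → a ≤ b + s * C) :
    a ≤ b := by
  have hlim : Tendsto (fun s : ℝ => b + s * C) (𝓝 0) (𝓝 (b + 0 * C)) :=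
    tendsto_const_nhds.add (tendsto_id.mul_const C)
  rw [zero_mul, add_zero] at hlim
  exact ge_of_tendsto (hlim.mono_left nhdsWithin_le_nhds) <|
    eventually_of_mem (Ioc_mem_nhdsGT one_pos) fun s hs => h s hs.1 hs.2

section Subgradient

variable {E : Type*} [NormedAddCommGroup E] [InnerProductSpace ℝ E]

theorem isSubgradAt_of_forall_add_neg_inner_le {f : E → EReal} {v x₀ : E}
    (h : ∀ u, f x₀ + ((-⟪v, x₀⟫ : ℝ) : EReal) ≤ f u + ((-⟪v, u⟫ : ℝ) : EReal)) :
    IsSubgradAt f v x₀ := fun u => by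
  have := add_le_add_left (h u) ((⟪v, u⟫ : ℝ) : EReal)
  rwa [add_assoc, add_assoc, ← EReal.coe_add, ← EReal.coe_add, neg_add_cancel, EReal.coe_zero,
    add_zero, ← sub_eq_neg_add, ← inner_sub_right] at this

theorem isSubgradAt_of_forall_add_le {g : E → EReal} {h : E → ℝ} {v x₀ : E}
    (hg_ne_bot : ∀ y, g y ≠ ⊥) (hg_proper : ∃ y, g y ≠ ⊤)
    (hg_cvx : ∀ (y₁ y₂ : E) (a b : ℝ), 0 ≤ a → 0 ≤ b → a + b = 1 →
      g (a • y₁ + b • y₂) ≤ (a : EReal) * g y₁ + (b : EReal) * g y₂)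
    (hmin : ∀ u, g x₀ + (h x₀ : EReal) ≤ g u + (h u : EReal))
    (hvar : ∀ w, ∃ C, ∀ s : ℝ, 0 < s → s ≤ 1 → h (x₀ + s • w) ≤ h x₀ - s * ⟪v, w⟫ + s ^ 2 * C) :
    IsSubgradAt g v x₀ := by
  have hx₀ : g x₀ ≠ ⊤ := by
    obtain ⟨y₀, hy₀⟩ := hg_proper
    intro htop
    have := hmin y₀
    rw [htop, EReal.top_add_coe, top_le_iff] at this
    exact EReal.add_ne_top hy₀ (EReal.coe_ne_top _) this
  intro u
  rcases eq_or_ne (g u) ⊤ with hu | hu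
  · rw [hu]; exact le_top
  obtain ⟨G₀, hG₀⟩ : ∃ G₀ : ℝ, (G₀ : EReal) = g x₀ := ⟨_, EReal.coe_toReal hx₀ (hg_ne_bot x₀)⟩
  obtain ⟨G, hG⟩ : ∃ G : ℝ, (G : EReal) = g u := ⟨_, EReal.coe_toReal hu (hg_ne_bot u)⟩
  rw [← hG₀, ← hG, ← EReal.coe_add, EReal.coe_le_coe_iff]
  obtain ⟨C, hC⟩ := hvar (u - x₀)
  -- test the minimality of `x₀` against `x₀ + s • (u - x₀)` and let `s → 0⁺`
  refine le_of_forall_le_add_mul (C := C) fun s hs hs1 => ?_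
  have hseg : (1 - s) • x₀ + s • u = x₀ + s • (u - x₀) := by
    rw [smul_sub, sub_smul, one_smul]; abel
  have hcvx := hg_cvx x₀ u (1 - s) s (by linarith) hs.le (by ring)
  rw [hseg, ← hG₀, ← hG, ← EReal.coe_mul, ← EReal.coe_mul, ← EReal.coe_add] at hcvx
  have hmin_s := (hmin (x₀ + s • (u - x₀))).trans (add_le_add_left hcvx _)
  rw [← hG₀, ← EReal.coe_add, ← EReal.coe_add, EReal.coe_le_coe_iff] at hmin_s
  have := hC s hs hs1
  nlinarith

end Subgradient

section ProxStep

variable {Y Z : Type*} [NormedAddCommGroup Y] [InnerProductSpace ℝ Y] [CompleteSpace Y]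
  [NormedAddCommGroup Z] [InnerProductSpace ℝ Z] [CompleteSpace Z]

/-- The `y`-subproblem of the proximal AMA, with `p = A x^{t+1}`, `z = z^t` and `y₀ = y^t`. -/
noncomputable def proxObjective (B : Y →L[ℝ] Z) (T : Y →L[ℝ] Y) (β : ℝ) (p c z : Z) (y₀ y : Y) :
    ℝ :=
  -⟪z, B y⟫ + β / 2 * ‖p + B y - c‖ ^ 2 + 1 / 2 * ⟪y - y₀, T (y - y₀)⟫

theorem proxObjective_add_smul (B : Y →L[ℝ] Z) {T : Y →L[ℝ] Y}
    (hT_sa : ∀ u v : Y, ⟪T u, v⟫ = ⟪u, T v⟫) (β : ℝ) (p c z : Z) (y₀ y₁ w : Y) (s : ℝ) :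
    proxObjective B T β p c z y₀ (y₁ + s • w) = proxObjective B T β p c z y₀ y₁
      - s * ⟪(B†) z - β • (B†) (p + B y₁ - c) - T (y₁ - y₀), w⟫
      + s ^ 2 * (β / 2 * ‖B w‖ ^ 2 + 1 / 2 * ⟪w, T w⟫) := by
  have hres : p + B (y₁ + s • w) - c = (p + B y₁ - c) + s • B w := by
    rw [map_add, map_smul]; abel
  have hdev : y₁ + s • w - y₀ = (y₁ - y₀) + s • w := by abel
  unfold proxObjective
  rw [hres, hdev, norm_add_sq_real]
  generalize y₁ - y₀ = d
  have hsym : ⟪d, T w⟫ = ⟪w, T d⟫ := by rw [← hT_sa, real_inner_comm]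
  simp only [map_add, map_smul, inner_add_left, inner_add_right, inner_sub_left,
    real_inner_smul_left, real_inner_smul_right, ContinuousLinearMap.adjoint_inner_left,
    norm_smul, Real.norm_eq_abs, mul_pow, sq_abs, hsym, real_inner_comm w (T d)]
  ring

theorem isSubgradAt_of_proxObjective_le {g : Y → EReal} (hg_ne_bot : ∀ y, g y ≠ ⊥)
    (hg_proper : ∃ y, g y ≠ ⊤)
    (hg_cvx : ∀ (y₁ y₂ : Y) (a b : ℝ), 0 ≤ a → 0 ≤ b → a + b = 1 →
      g (a • y₁ + b • y₂) ≤ (a : EReal) * g y₁ + (b : EReal) * g y₂)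
    (B : Y →L[ℝ] Z) {T : Y →L[ℝ] Y} (hT_sa : ∀ u v : Y, ⟪T u, v⟫ = ⟪u, T v⟫)
    {β : ℝ} {p c z : Z} {y₀ y₁ : Y}
    (hmin : ∀ y', g y₁ + (proxObjective B T β p c z y₀ y₁ : EReal)
      ≤ g y' + (proxObjective B T β p c z y₀ y' : EReal)) :
    IsSubgradAt g ((B†) z - β • (B†) (p + B y₁ - c) - T (y₁ - y₀)) y₁ :=
  isSubgradAt_of_forall_add_le hg_ne_bot hg_proper hg_cvx hmin fun w =>
    ⟨_, fun s _ _ => (proxObjective_add_smul B hT_sa β p c z y₀ y₁ w s).le⟩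

end ProxStep

theorem exists_pos_mul_norm_sq_le {E : Type*} [NormedAddCommGroup E] [NormedSpace ℝ E]
    [FiniteDimensional ℝ E] {q : E → ℝ} (hq_cont : Continuous q)
    (hq_hom : ∀ (a : ℝ) (w : E), q (a • w) = a ^ 2 * q w) (hq_pos : ∀ w : E, w ≠ 0 → 0 < q w) :
    ∃ δ : ℝ, 0 < δ ∧ ∀ w : E, δ * ‖w‖ ^ 2 ≤ q w := by
  have hq0 : q 0 = 0 := by simpa using hq_hom 0 0
  rcases subsingleton_or_nontrivial E with hE | hE
  · exact ⟨1, one_pos, fun w => by simp [Subsingleton.elim w 0, hq0]⟩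
  obtain ⟨w₀, hw₀, hmin⟩ := (isCompact_sphere (0 : E) 1).exists_isMinOn
    (NormedSpace.sphere_nonempty.mpr zero_le_one) hq_cont.continuousOn
  have hw₀_norm : ‖w₀‖ = 1 := by simpa using hw₀
  refine ⟨q w₀, hq_pos w₀ (norm_ne_zero_iff.mp (by simp [hw₀_norm])), fun w => ?_⟩
  rcases eq_or_ne w 0 with rfl | hw
  · simp [hq0]
  have hn : ‖w‖ ≠ 0 := norm_ne_zero_iff.mpr hw
  have hunit : ‖w‖⁻¹ • w ∈ Metric.sphere (0 : E) 1 := by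
    simp [norm_smul, inv_mul_cancel₀ hn]
  calc q w₀ * ‖w‖ ^ 2 ≤ q (‖w‖⁻¹ • w) * ‖w‖ ^ 2 := by gcongr; exact hmin hunit
    _ = q w := by rw [hq_hom]; field_simp

theorem mul_norm_sq_le_quadratic {E : Type*} [NormedAddCommGroup E] [InnerProductSpace ℝ E]
    {p q r : ℝ} (hp : 0 < p) (u v : E) :
    (r - q ^ 2 / p) * ‖v‖ ^ 2 ≤ p * ‖u‖ ^ 2 + 2 * q * ⟪u, v⟫ + r * ‖v‖ ^ 2 := by
  have hsq : ‖p • u + q • v‖ ^ 2 = p ^ 2 * ‖u‖ ^ 2 + 2 * (p * q) * ⟪u, v⟫ + q ^ 2 * ‖v‖ ^ 2 := by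
    rw [norm_add_sq_real]
    simp only [real_inner_smul_left, real_inner_smul_right, norm_smul, Real.norm_eq_abs, mul_pow,
      sq_abs]
    ring
  have key : p * (p * ‖u‖ ^ 2 + 2 * q * ⟪u, v⟫ + r * ‖v‖ ^ 2 - (r - q ^ 2 / p) * ‖v‖ ^ 2)
      = ‖p • u + q • v‖ ^ 2 := by
    rw [hsq]; field_simp; ring
  nlinarith [sq_nonneg ‖p • u + q • v‖]

theorem prox_ama_stepsize_pos {β γ μ : ℝ} (hβ : 0 < β) (hμ : 0 < μ)
    (hγ : γ < 1 + min β μ / (2 * β)) :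
    0 < β + μ - γ * β ∧ 0 < β * (2 - γ) - (β * (1 - γ)) ^ 2 / (β + μ - γ * β) := by
  have hγ' : 2 * γ * β < 2 * β + min β μ := by
    have h := mul_lt_mul_of_pos_right hγ (by positivity : (0 : ℝ) < 2 * β)
    rw [add_mul, one_mul, div_mul_cancel₀ _ (by positivity)] at h
    linarith
  have hp : 0 < β + μ - γ * β := by
    rcases min_cases β μ with ⟨h, _⟩ | ⟨h, _⟩ <;> rw [h] at hγ' <;> nlinarith
  refine ⟨hp, ?_⟩
  rw [sub_pos, div_lt_iff₀ hp]
  rcases min_cases β μ with ⟨h, _⟩ | ⟨h, _⟩ <;> rw [h] at hγ' <;>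
    nlinarith [mul_pos hβ hμ, sq_nonneg (β - μ)]

theorem residual_eq_of_feasible {X Y Z : Type*} [NormedAddCommGroup X] [NormedSpace ℝ X]
    [NormedAddCommGroup Y] [NormedSpace ℝ Y] [NormedAddCommGroup Z] [NormedSpace ℝ Z]
    {A : X →L[ℝ] Z} {B : Y →L[ℝ] Z} {c : Z} {xb : X} {yb : Y} (hA1c : A xb + B yb - c = 0)
    (x' : X) (y' : Y) : A x' + B y' - c = A (x' - xb) + B (y' - yb) := by
  rw [map_sub, map_sub, ← sub_eq_zero, ← hA1c]; abel

section Descent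

variable {X Y Z : Type*} [NormedAddCommGroup X] [InnerProductSpace ℝ X] [CompleteSpace X]
  [NormedAddCommGroup Y] [InnerProductSpace ℝ Y] [CompleteSpace Y]
  [NormedAddCommGroup Z] [InnerProductSpace ℝ Z] [CompleteSpace Z]

/-- The coefficient of `‖B (y₁ - yb)‖ ^ 2` is what is left of `β (2 - γ)` after completing the
square in the cross term `⟪A (x₁ - xb), B (y₁ - yb)⟫`. -/
theorem prox_ama_descent_step {f : X → EReal} {g : Y → EReal} {A : X →L[ℝ] Z} {B : Y →L[ℝ] Z}
    {c : Z} {Sf : X →L[ℝ] X} {Sg T : Y →L[ℝ] Y} (hT_sa : ∀ u v : Y, ⟪T u, v⟫ = ⟪u, T v⟫)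
    (hf_mono : ∀ (x₁ x₂ u₁ u₂ : X), IsSubgradAt f u₁ x₁ → IsSubgradAt f u₂ x₂ →
      ⟪x₁ - x₂, Sf (x₁ - x₂)⟫ ≤ ⟪u₁ - u₂, x₁ - x₂⟫)
    (hg_mono : ∀ (y₁ y₂ v₁ v₂ : Y), IsSubgradAt g v₁ y₁ → IsSubgradAt g v₂ y₂ →
      ⟪y₁ - y₂, Sg (y₁ - y₂)⟫ ≤ ⟪v₁ - v₂, y₁ - y₂⟫)
    {β γ μ δ : ℝ} (hγβ : 0 < γ * β) (hp : 0 < β + μ - γ * β)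
    (hSf : ∀ w, (β + μ) * ‖A w‖ ^ 2 + δ * ‖w‖ ^ 2 ≤ 2 * ⟪w, Sf w⟫)
    {xb : X} {yb : Y} {zb : Z} (hA1f : IsSubgradAt f ((A†) zb) xb)
    (hA1g : IsSubgradAt g ((B†) zb) yb) (hA1c : A xb + B yb - c = 0)
    {x₁ : X} {y₀ y₁ : Y} {z₀ z₁ : Z} (hfx : IsSubgradAt f ((A†) z₀) x₁)
    (hgy : IsSubgradAt g ((B†) z₀ - β • (B†) (A x₁ + B y₁ - c) - T (y₁ - y₀)) y₁)
    (hz : z₁ = z₀ - (γ * β) • (A x₁ + B y₁ - c)) :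
    1 / (γ * β) * ‖z₁ - zb‖ ^ 2 + ⟪y₁ - yb, T (y₁ - yb)⟫
      + (δ * ‖x₁ - xb‖ ^ 2 + 2 * ⟪y₁ - yb, Sg (y₁ - yb)⟫ + ⟪y₁ - y₀, T (y₁ - y₀)⟫
        + (β * (2 - γ) - (β * (1 - γ)) ^ 2 / (β + μ - γ * β)) * ‖B (y₁ - yb)‖ ^ 2)
      ≤ 1 / (γ * β) * ‖z₀ - zb‖ ^ 2 + ⟪y₀ - yb, T (y₀ - yb)⟫ := by
  have hf_step := hf_mono _ _ _ _ hfx hA1f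
  have hg_step := hg_mono _ _ _ _ hgy hA1g
  rw [residual_eq_of_feasible hA1c] at hg_step hz
  rw [hz, sub_right_comm, show y₀ - yb = (y₁ - yb) - (y₁ - y₀) by abel]
  rw [← map_sub, ContinuousLinearMap.adjoint_inner_left] at hf_step
  rw [sub_right_comm, sub_right_comm _ (β • _), ← map_sub] at hg_step
  clear hfx hgy hz
  generalize x₁ - xb = dx at *
  generalize y₁ - yb = dy at *
  generalize y₁ - y₀ = d at *
  generalize z₀ - zb = dz at *
  have hg_inner : ⟪(B†) dz - β • (B†) (A dx + B dy) - T d, dy⟫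
      = ⟪dz, B dy⟫ - β * (⟪A dx, B dy⟫ + ‖B dy‖ ^ 2) - ⟪dy, T d⟫ := by
    simp only [inner_sub_left, real_inner_smul_left, ContinuousLinearMap.adjoint_inner_left,
      inner_add_left, real_inner_self_eq_norm_sq, real_inner_comm dy (T d)]
  have hz_sq : 1 / (γ * β) * ‖dz - (γ * β) • (A dx + B dy)‖ ^ 2 = 1 / (γ * β) * ‖dz‖ ^ 2
      - 2 * ⟪dz, A dx⟫ - 2 * ⟪dz, B dy⟫
      + γ * β * (‖A dx‖ ^ 2 + 2 * ⟪A dx, B dy⟫ + ‖B dy‖ ^ 2) := by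
    rw [norm_sub_sq_real, norm_smul, mul_pow, norm_add_sq_real, real_inner_smul_right,
      inner_add_right, Real.norm_eq_abs, abs_of_pos hγβ]
    generalize γ * β = τ at hγβ ⊢
    field_simp
    ring
  have hT_sq : ⟪dy - d, T (dy - d)⟫ = ⟪dy, T dy⟫ - 2 * ⟪dy, T d⟫ + ⟪d, T d⟫ := by
    simp only [map_sub, inner_sub_left, inner_sub_right, real_inner_comm d (T dy), ← hT_sa dy d]
    ring
  have hform := mul_norm_sq_le_quadratic (q := β * (1 - γ)) (r := β * (2 - γ)) hp (A dx) (B dy)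
  linarith [hSf dx]

end Descent

theorem summable_of_add_le_of_nonneg {S e : ℕ → ℝ} (h : ∀ t, S (t + 1) + e t ≤ S t)
    (hS : ∀ t, 0 ≤ S t) (he : ∀ t, 0 ≤ e t) : Summable e := by
  have hsum : ∀ n, ∑ t ∈ Finset.range n, e t + S n ≤ S 0 := by
    intro n
    induction n with
    | zero => simp
    | succ n ih => rw [Finset.sum_range_succ]; linarith [h n]
  exact summable_of_sum_range_le he fun n => by linarith [hsum n, hS n]

theorem tendsto_sqrt_zero_of_mul_le {α : Type*} {l : Filter α} {u e : α → ℝ} {c : ℝ}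
    (hc : 0 < c) (hu : ∀ t, 0 ≤ u t) (hue : ∀ t, c * u t ≤ e t) (he : Tendsto e l (𝓝 0)) :
    Tendsto (fun t => √(u t)) l (𝓝 0) := by
  have hu0 : Tendsto u l (𝓝 0) :=
    squeeze_zero hu (fun t => (le_div_iff₀' hc).2 (hue t)) (by simpa using he.div_const c)
  simpa using hu0.sqrt

section Sequences

variable {X Y Z : Type*} [NormedAddCommGroup X] [InnerProductSpace ℝ X]
  [NormedAddCommGroup Y] [InnerProductSpace ℝ Y] [NormedAddCommGroup Z] [InnerProductSpace ℝ Z]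

theorem prox_ama_antitone_and_tendsto {A : X →L[ℝ] Z} {B : Y →L[ℝ] Z} {c : Z} {Sg T : Y →L[ℝ] Y}
    (hSg_psd : ∀ y : Y, 0 ≤ ⟪y, Sg y⟫) (hT_psd : ∀ y : Y, 0 ≤ ⟪y, T y⟫) {β γ δ κ : ℝ}
    (hγβ : 0 < γ * β) (hδ : 0 < δ) (hκ : 0 < κ) {x : ℕ → X} {y : ℕ → Y} {z : ℕ → Z}
    (hz : ∀ t : ℕ, z (t+1) = z t - (γ * β) • (A (x (t+1)) + B (y (t+1)) - c))
    {xb : X} {yb : Y} {zb : Z} (hA1c : A xb + B yb - c = 0)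
    (hdescent : ∀ t : ℕ, 1 / (γ * β) * ‖z (t+1) - zb‖ ^ 2 + ⟪y (t+1) - yb, T (y (t+1) - yb)⟫
      + (δ * ‖x (t+1) - xb‖ ^ 2 + 2 * ⟪y (t+1) - yb, Sg (y (t+1) - yb)⟫
        + ⟪y (t+1) - y t, T (y (t+1) - y t)⟫ + κ * ‖B (y (t+1) - yb)‖ ^ 2)
      ≤ 1 / (γ * β) * ‖z t - zb‖ ^ 2 + ⟪y t - yb, T (y t - yb)⟫) :
    (∀ t : ℕ,
      1 / (γ * β) * ‖z (t+1) - zb‖ ^ 2 + ⟪y (t+1) - yb, T (y (t+1) - yb)⟫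
        ≤ 1 / (γ * β) * ‖z t - zb‖ ^ 2 + ⟪y t - yb, T (y t - yb)⟫) ∧
    Tendsto (fun t => ‖x (t+1) - xb‖) atTop (𝓝 0) ∧
    Tendsto (fun t => Real.sqrt ⟪y t - yb, Sg (y t - yb)⟫) atTop (𝓝 0) ∧
    Tendsto (fun t => ‖B (y t - yb)‖) atTop (𝓝 0) ∧
    Tendsto (fun t => Real.sqrt ⟪y (t+1) - y t, T (y (t+1) - y t)⟫) atTop (𝓝 0) ∧
    Tendsto (fun t => ‖z (t+1) - z t‖) atTop (𝓝 0) := by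
  have hx_nn (t : ℕ) : 0 ≤ δ * ‖x (t+1) - xb‖ ^ 2 := by positivity
  have hSg_nn (t : ℕ) := hSg_psd (y (t+1) - yb)
  have hT_nn (t : ℕ) := hT_psd (y (t+1) - y t)
  have hB_nn (t : ℕ) : 0 ≤ κ * ‖B (y (t+1) - yb)‖ ^ 2 := by positivity
  have hsum := summable_of_add_le_of_nonneg
    (S := fun t => 1 / (γ * β) * ‖z t - zb‖ ^ 2 + ⟪y t - yb, T (y t - yb)⟫) hdescent
    (fun t => add_nonneg (by positivity) (hT_psd (y t - yb)))
    (fun t => by linarith [hx_nn t, hSg_nn t, hT_nn t, hB_nn t])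
  have he := hsum.tendsto_atTop_zero
  have hx_lim : Tendsto (fun t => ‖x (t+1) - xb‖) atTop (𝓝 0) := by
    simpa only [Real.sqrt_sq_eq_abs, abs_norm] using
      tendsto_sqrt_zero_of_mul_le (u := fun t => ‖x (t+1) - xb‖ ^ 2) hδ (fun t => sq_nonneg _)
      (fun t => by linarith [hSg_nn t, hT_nn t, hB_nn t]) he
  have hB_lim : Tendsto (fun t => ‖B (y (t+1) - yb)‖) atTop (𝓝 0) := by
    simpa only [Real.sqrt_sq_eq_abs, abs_norm] using
      tendsto_sqrt_zero_of_mul_le (u := fun t => ‖B (y (t+1) - yb)‖ ^ 2) hκ (fun t => sq_nonneg _)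
      (fun t => by linarith [hx_nn t, hSg_nn t, hT_nn t]) he
  have hz_step (t : ℕ) :
      ‖z (t+1) - z t‖ ≤ γ * β * (‖A‖ * ‖x (t+1) - xb‖ + ‖B (y (t+1) - yb)‖) := by
    rw [hz, sub_sub_cancel_left, norm_neg, norm_smul, Real.norm_eq_abs, abs_of_pos hγβ,
      residual_eq_of_feasible hA1c]
    gcongr
    exact (norm_add_le _ _).trans (by gcongr; exact A.le_opNorm _)
  refine ⟨fun t => by linarith [hdescent t, hx_nn t, hSg_nn t, hT_nn t, hB_nn t], hx_lim,
    (tendsto_add_atTop_iff_nat 1).mp ?_, (tendsto_add_atTop_iff_nat 1).mp hB_lim, ?_, ?_⟩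
  · exact tendsto_sqrt_zero_of_mul_le two_pos (fun t => hSg_nn t)
      (fun t => by linarith [hx_nn t, hT_nn t, hB_nn t]) he
  · exact tendsto_sqrt_zero_of_mul_le one_pos hT_nn
      (fun t => by linarith [hx_nn t, hSg_nn t, hB_nn t]) he
  · refine squeeze_zero (fun t => norm_nonneg _) hz_step ?_
    simpa using ((hx_lim.const_mul ‖A‖).add hB_lim).const_mul (γ * β)

end Sequences

theorem stmt_2_general
    {X Y Z : Type*}
    [NormedAddCommGroup X] [InnerProductSpace ℝ X] [FiniteDimensional ℝ X]
    [NormedAddCommGroup Y] [InnerProductSpace ℝ Y] [FiniteDimensional ℝ Y]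
    [NormedAddCommGroup Z] [InnerProductSpace ℝ Z] [FiniteDimensional ℝ Z]
    (f : X → EReal) (g : Y → EReal)
    -- `f` and `g` are proper
    (hg_ne_bot : ∀ y, g y ≠ ⊥) (hg_proper : ∃ y, g y ≠ ⊤)
    -- `f` and `g` are convex
    (hg_cvx : ∀ (y₁ y₂ : Y) (a b : ℝ), 0 ≤ a → 0 ≤ b → a + b = 1 →
      g (a • y₁ + b • y₂) ≤ (a : EReal) * g y₁ + (b : EReal) * g y₂)
    (A : X →L[ℝ] Z) (B : Y →L[ℝ] Z) (c : Z)
    (Sf : X →L[ℝ] X) (Sg : Y →L[ℝ] Y) (T : Y →L[ℝ] Y)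
    -- `Sf ≻ 0`, `Sg ⪰ 0`, `T ⪰ 0` are self-adjoint
    (hT_sa : ∀ u v : Y, ⟪T u, v⟫ = ⟪u, T v⟫)
    (hSg_psd : ∀ y : Y, 0 ≤ ⟪y, Sg y⟫)
    (hT_psd : ∀ y : Y, 0 ≤ ⟪y, T y⟫)
    -- the subdifferential monotonicity conditions on `f` and `g`
    (hf_mono : ∀ (x₁ x₂ u₁ u₂ : X), IsSubgradAt f u₁ x₁ → IsSubgradAt f u₂ x₂ →
      ⟪x₁ - x₂, Sf (x₁ - x₂)⟫ ≤ ⟪u₁ - u₂, x₁ - x₂⟫)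
    (hg_mono : ∀ (y₁ y₂ v₁ v₂ : Y), IsSubgradAt g v₁ y₁ → IsSubgradAt g v₂ y₂ →
      ⟪y₁ - y₂, Sg (y₁ - y₂)⟫ ≤ ⟪v₁ - v₂, y₁ - y₂⟫)
    (β γ : ℝ) (hβ : 0 < β) (hγ : 0 < γ)
    (x : ℕ → X) (y : ℕ → Y) (z : ℕ → Z)
    -- the proximal AMA iterations
    (hx : ∀ (t : ℕ) (x' : X),
      f (x (t+1)) + ((-⟪z t, A (x (t+1))⟫ : ℝ) : EReal)
        ≤ f x' + ((-⟪z t, A x'⟫ : ℝ) : EReal))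
    (hy : ∀ (t : ℕ) (y' : Y),
      g (y (t+1)) + ((-⟪z t, B (y (t+1))⟫ + β / 2 * ‖A (x (t+1)) + B (y (t+1)) - c‖ ^ 2
          + 1 / 2 * ⟪y (t+1) - y t, T (y (t+1) - y t)⟫ : ℝ) : EReal)
        ≤ g y' + ((-⟪z t, B y'⟫ + β / 2 * ‖A (x (t+1)) + B y' - c‖ ^ 2
          + 1 / 2 * ⟪y' - y t, T (y' - y t)⟫ : ℝ) : EReal))
    (hz : ∀ t : ℕ, z (t+1) = z t - (γ * β) • (A (x (t+1)) + B (y (t+1)) - c))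
    -- assumption A1 with an explicit triple `(x̄, ȳ, z̄)`
    (xb : X) (yb : Y) (zb : Z)
    (hA1f : IsSubgradAt f (ContinuousLinearMap.adjoint A zb) xb)
    (hA1g : IsSubgradAt g (ContinuousLinearMap.adjoint B zb) yb)
    (hA1c : A xb + B yb - c = 0)
    -- condition (ii): for some `μ > 0`, `2Σf − (β+μ)A*A ≻ 0` and `γ < 1 + min{β,μ}/(2β)`
    (hcond2 : ∃ μ : ℝ, 0 < μ ∧
      (∀ w : X, w ≠ 0 → 0 < 2 * ⟪w, Sf w⟫ - (β + μ) * ‖A w‖ ^ 2) ∧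
      γ < 1 + min β μ / (2 * β)) :
    (∀ t : ℕ,
      1 / (γ * β) * ‖z (t+1) - zb‖ ^ 2 + ⟪y (t+1) - yb, T (y (t+1) - yb)⟫
        ≤ 1 / (γ * β) * ‖z t - zb‖ ^ 2 + ⟪y t - yb, T (y t - yb)⟫) ∧
    Tendsto (fun t => ‖x (t+1) - xb‖) atTop (𝓝 0) ∧
    Tendsto (fun t => Real.sqrt ⟪y t - yb, Sg (y t - yb)⟫) atTop (𝓝 0) ∧
    Tendsto (fun t => ‖B (y t - yb)‖) atTop (𝓝 0) ∧
    Tendsto (fun t => Real.sqrt ⟪y (t+1) - y t, T (y (t+1) - y t)⟫) atTop (𝓝 0) ∧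
    Tendsto (fun t => ‖z (t+1) - z t‖) atTop (𝓝 0) := by
  obtain ⟨μ, hμ, hSf_pos, hγμ⟩ := hcond2
  obtain ⟨hp, hκ⟩ := prox_ama_stepsize_pos hβ hμ hγμ
  obtain ⟨δ, hδ, hSf⟩ := exists_pos_mul_norm_sq_le
    (q := fun w : X => 2 * ⟪w, Sf w⟫ - (β + μ) * ‖A w‖ ^ 2) (by fun_prop)
    (fun a w => by
      simp only [map_smul, real_inner_smul_left, real_inner_smul_right, norm_smul,
        Real.norm_eq_abs, mul_pow, sq_abs]
      ring)
    hSf_pos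
  have hfx (t : ℕ) : IsSubgradAt f ((A†) (z t)) (x (t+1)) :=
    isSubgradAt_of_forall_add_neg_inner_le fun u => by
      simpa only [ContinuousLinearMap.adjoint_inner_left] using hx t u
  refine prox_ama_antitone_and_tendsto hSg_psd hT_psd (mul_pos hγ hβ) hδ hκ hz hA1c fun t =>
    prox_ama_descent_step hT_sa hf_mono hg_mono (mul_pos hγ hβ) hp
      (fun w => by linarith [hSf w]) hA1f hA1g hA1c (hfx t)
      (isSubgradAt_of_proxObjective_le hg_ne_bot hg_proper hg_cvx B hT_sa (hy t)) (hz t)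

/-- **Monotonicity and vanishing quantities for the proximal AMA
(from the proof of Theorem 3.1).** Under A1 and conditions (i), (ii), the sequence
`t ↦ (1/(γβ))‖z^t − z̄‖² + ‖y^t − ȳ‖²_T` is nonincreasing, and
`‖x^{t+1} − x̄‖ → 0`, `‖y^t − ȳ‖_{Σg} → 0`, `‖B(y^t − ȳ)‖ → 0`,
`‖y^{t+1} − y^t‖_T → 0`, `‖z^{t+1} − z^t‖ → 0`. -/
theorem stmt_2
    {X Y Z : Type*}
    [NormedAddCommGroup X] [InnerProductSpace ℝ X] [FiniteDimensional ℝ X]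
    [NormedAddCommGroup Y] [InnerProductSpace ℝ Y] [FiniteDimensional ℝ Y]
    [NormedAddCommGroup Z] [InnerProductSpace ℝ Z] [FiniteDimensional ℝ Z]
    (f : X → EReal) (g : Y → EReal)
    -- `f` and `g` are proper
    (hf_ne_bot : ∀ x, f x ≠ ⊥) (hf_proper : ∃ x, f x ≠ ⊤)
    (hg_ne_bot : ∀ y, g y ≠ ⊥) (hg_proper : ∃ y, g y ≠ ⊤)
    -- `f` and `g` are closed
    (hf_lsc : LowerSemicontinuous f) (hg_lsc : LowerSemicontinuous g)
    -- `f` and `g` are convex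
    (hf_cvx : ∀ (x₁ x₂ : X) (a b : ℝ), 0 ≤ a → 0 ≤ b → a + b = 1 →
      f (a • x₁ + b • x₂) ≤ (a : EReal) * f x₁ + (b : EReal) * f x₂)
    (hg_cvx : ∀ (y₁ y₂ : Y) (a b : ℝ), 0 ≤ a → 0 ≤ b → a + b = 1 →
      g (a • y₁ + b • y₂) ≤ (a : EReal) * g y₁ + (b : EReal) * g y₂)
    (A : X →L[ℝ] Z) (B : Y →L[ℝ] Z) (c : Z)
    (Sf : X →L[ℝ] X) (Sg : Y →L[ℝ] Y) (T : Y →L[ℝ] Y)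
    -- `Sf ≻ 0`, `Sg ⪰ 0`, `T ⪰ 0` are self-adjoint
    (hSf_sa : ∀ u v : X, ⟪Sf u, v⟫ = ⟪u, Sf v⟫)
    (hSg_sa : ∀ u v : Y, ⟪Sg u, v⟫ = ⟪u, Sg v⟫)
    (hT_sa : ∀ u v : Y, ⟪T u, v⟫ = ⟪u, T v⟫)
    (hSf_pd : ∀ x : X, x ≠ 0 → 0 < ⟪x, Sf x⟫)
    (hSg_psd : ∀ y : Y, 0 ≤ ⟪y, Sg y⟫)
    (hT_psd : ∀ y : Y, 0 ≤ ⟪y, T y⟫)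
    -- the subdifferential monotonicity conditions on `f` and `g`
    (hf_mono : ∀ (x₁ x₂ u₁ u₂ : X), IsSubgradAt f u₁ x₁ → IsSubgradAt f u₂ x₂ →
      ⟪x₁ - x₂, Sf (x₁ - x₂)⟫ ≤ ⟪u₁ - u₂, x₁ - x₂⟫)
    (hg_mono : ∀ (y₁ y₂ v₁ v₂ : Y), IsSubgradAt g v₁ y₁ → IsSubgradAt g v₂ y₂ →
      ⟪y₁ - y₂, Sg (y₁ - y₂)⟫ ≤ ⟪v₁ - v₂, y₁ - y₂⟫)
    (β γ : ℝ) (hβ : 0 < β) (hγ : 0 < γ)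
    (x : ℕ → X) (y : ℕ → Y) (z : ℕ → Z)
    -- the proximal AMA iterations
    (hx : ∀ (t : ℕ) (x' : X),
      f (x (t+1)) + ((-⟪z t, A (x (t+1))⟫ : ℝ) : EReal)
        ≤ f x' + ((-⟪z t, A x'⟫ : ℝ) : EReal))
    (hy : ∀ (t : ℕ) (y' : Y),
      g (y (t+1)) + ((-⟪z t, B (y (t+1))⟫ + β / 2 * ‖A (x (t+1)) + B (y (t+1)) - c‖ ^ 2
          + 1 / 2 * ⟪y (t+1) - y t, T (y (t+1) - y t)⟫ : ℝ) : EReal)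
        ≤ g y' + ((-⟪z t, B y'⟫ + β / 2 * ‖A (x (t+1)) + B y' - c‖ ^ 2
          + 1 / 2 * ⟪y' - y t, T (y' - y t)⟫ : ℝ) : EReal))
    (hz : ∀ t : ℕ, z (t+1) = z t - (γ * β) • (A (x (t+1)) + B (y (t+1)) - c))
    -- assumption A1 with an explicit triple `(x̄, ȳ, z̄)`
    (xb : X) (yb : Y) (zb : Z)
    (hA1f : IsSubgradAt f (ContinuousLinearMap.adjoint A zb) xb)
    (hA1g : IsSubgradAt g (ContinuousLinearMap.adjoint B zb) yb)
    (hA1c : A xb + B yb - c = 0)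
    -- condition (i): `Σg + T + βB*B ≻ 0`
    (hcond1 : ∀ w : Y, w ≠ 0 → 0 < ⟪w, Sg w⟫ + ⟪w, T w⟫ + β * ‖B w‖ ^ 2)
    -- condition (ii): for some `μ > 0`, `2Σf − (β+μ)A*A ≻ 0` and `γ < 1 + min{β,μ}/(2β)`
    (hcond2 : ∃ μ : ℝ, 0 < μ ∧
      (∀ w : X, w ≠ 0 → 0 < 2 * ⟪w, Sf w⟫ - (β + μ) * ‖A w‖ ^ 2) ∧
      γ < 1 + min β μ / (2 * β)) :
    (∀ t : ℕ,
      1 / (γ * β) * ‖z (t+1) - zb‖ ^ 2 + ⟪y (t+1) - yb, T (y (t+1) - yb)⟫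
        ≤ 1 / (γ * β) * ‖z t - zb‖ ^ 2 + ⟪y t - yb, T (y t - yb)⟫) ∧
    Tendsto (fun t => ‖x (t+1) - xb‖) atTop (𝓝 0) ∧
    Tendsto (fun t => Real.sqrt ⟪y t - yb, Sg (y t - yb)⟫) atTop (𝓝 0) ∧
    Tendsto (fun t => ‖B (y t - yb)‖) atTop (𝓝 0) ∧
    Tendsto (fun t => Real.sqrt ⟪y (t+1) - y t, T (y (t+1) - y t)⟫) atTop (𝓝 0) ∧
    Tendsto (fun t => ‖z (t+1) - z t‖) atTop (𝓝 0) :=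
  stmt_2_general f g hg_ne_bot hg_proper hg_cvx A B c Sf Sg T hT_sa hSg_psd hT_psd hf_mono hg_mono β
    γ hβ hγ x y z hx hy hz xb yb zb hA1f hA1g hA1c hcond2
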